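/- arXiv:2402.05835 — 4 statements merged into one kernel-verified Lean document; each statement's English description precedes it below -/
import Mathlib

section
/- With g_k(n) = Σ_x p_x^k (1-p_x)^{n-k} and remainder R_{n,k} = C(n,k)·(-1)^{n-k}·Σ_x p_x^{n+1}, the expected total mass satisfies E[M_k] = C(n,k)·Σ_{i=1}^{n-k} (-1)^{i-1} g_{k+i}(n) + R_{n,k}. -/
/-!
For a fixed symbol `x`, the words of length `n` containing `x` exactly `k` times have total
probability `C(n,k) p_x^k (1 - p_x)^(n-k)`, the coefficient of `T^k` in `(p_x T + 1 - p_x)^n`.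
Hence `E[M_k] = C(n,k) Σ_x p_x^(k+1) (1 - p_x)^(n-k)`. The identity
`(1 - p)^m = Σ_{i=1}^m (-p)^(i-1) (1 - p)^(m-i) + (-p)^m`, i.e. the factorisation of `a^m - b^m`
with `a - b = 1`, turns each summand into the alternating sum of the `g_{k+i}(n)` plus the
remainder.
-/

open Finset MeasureTheory

open Polynomial in
theorem coeff_C_mul_X_add_C_pow {R : Type*} [CommSemiring R] (a b : R) (n k : ℕ) :
    ((C a * X + C b) ^ n).coeff k = n.choose k * a ^ k * b ^ (n - k) := by
  rw [add_pow, finsetSum_coeff]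
  simp only [mul_pow, ← C_pow, ← C_eq_natCast, mul_assoc, mul_comm _ (C _), coeff_C_mul,
    coeff_X_pow]
  simp only [mul_ite, mul_one, mul_zero, sum_ite_eq, mem_range]
  split_ifs with h
  · ring
  · rw [Nat.choose_eq_zero_of_lt (by omega)]; simp

open Polynomial in
theorem sum_prod_of_count_eq {α R : Type*} [Fintype α] [DecidableEq α] [CommSemiring R]
    (q : α → R) (x : α) (n k : ℕ) :
    ∑ ω : Fin n → α,
        (if (∑ i, if ω i = x then 1 else 0 : ℕ) = k then ∏ i, q (ω i) else 0)
      = n.choose k * q x ^ k * (∑ y ∈ univ.erase x, q y) ^ (n - k) := by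
  -- mark each occurrence of `x` by one factor `X`, so that `X ^ k` tracks the words we sum over
  have hmarked : ∑ y, C (q y) * X ^ (if y = x then 1 else 0)
      = C (q x) * X + C (∑ y ∈ univ.erase x, q y) := by
    rw [← add_sum_erase _ _ (mem_univ x), map_sum]
    congr 1
    · simp
    · exact sum_congr rfl fun y hy => by simp [ne_of_mem_erase hy]
  have hgen :
      ∑ ω : Fin n → α, C (∏ i, q (ω i)) * X ^ (∑ i, if ω i = x then 1 else 0 : ℕ)
      = (C (q x) * X + C (∑ y ∈ univ.erase x, q y)) ^ n := by
    rw [← hmarked, ← Fin.prod_const, Fintype.prod_sum]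
    simp only [map_prod, prod_pow_eq_pow_sum, prod_mul_distrib]
  rw [← coeff_C_mul_X_add_C_pow, ← hgen, finsetSum_coeff]
  simp only [coeff_C_mul_X_pow, eq_comm (a := k)]

theorem one_sub_pow_eq_sum_Icc {R : Type*} [CommRing R] (q : R) (m : ℕ) :
    (1 - q) ^ m = ∑ i ∈ Icc 1 m, (-q) ^ (i - 1) * (1 - q) ^ (m - i) + (-q) ^ m := by
  have h := geom_sum₂_mul (-q) (1 - q) m
  rw [show -q - (1 - q) = -1 by ring, mul_neg_one] at h
  rw [← Ico_add_one_right_eq_Icc, sum_Ico_eq_sum_range, Nat.add_sub_cancel]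
  simp only [Nat.sub_sub] at h
  simp only [add_tsub_cancel_left]
  linear_combination h

theorem pow_succ_mul_one_sub_pow_eq_sum_Icc {R : Type*} [CommRing R] (q : R) {n k : ℕ}
    (hk : k ≤ n) :
    q ^ (k + 1) * (1 - q) ^ (n - k)
      = ∑ i ∈ Icc 1 (n - k), (-1) ^ (i - 1) * (q ^ (k + i) * (1 - q) ^ (n - (k + i)))
        + (-1) ^ (n - k) * q ^ (n + 1) := by
  rw [one_sub_pow_eq_sum_Icc, mul_add, mul_sum]
  congr 1
  · refine sum_congr rfl fun i hi => ?_
    obtain ⟨j, rfl⟩ := Nat.exists_eq_add_of_le' (mem_Icc.mp hi).1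
    rw [Nat.sub_sub, neg_pow, Nat.add_sub_cancel]
    ring
  · rw [neg_pow, show n + 1 = k + 1 + (n - k) by omega]
    ring

theorem integral_pi_eq_sum_prod_measureReal {ι α : Type*} [Fintype ι] [DecidableEq ι]
    [Fintype α] [MeasurableSpace α] [MeasurableSingletonClass α]
    (μ : Measure α) [IsFiniteMeasure μ]
    (f : (ι → α) → ℝ) :
    ∫ ω, f ω ∂(Measure.pi fun _ : ι => μ) = ∑ ω, (∏ i, μ.real {ω i}) * f ω := by
  simp [integral_fintype Integrable.of_finite, Measure.real, ENNReal.toReal_prod]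

theorem integral_sum_ite_count_eq {α : Type*} [Fintype α] [DecidableEq α] [MeasurableSpace α]
    [MeasurableSingletonClass α] (μ : Measure α) [IsProbabilityMeasure μ] (n k : ℕ) :
    ∫ ω, (∑ x, if (∑ i, if ω i = x then 1 else 0 : ℕ) = k then μ.real {x} else 0)
        ∂(Measure.pi fun _ : Fin n => μ)
      = ∑ x, n.choose k * μ.real {x} ^ (k + 1) * (1 - μ.real {x}) ^ (n - k) := by
  have hcompl : ∀ x, ∑ y ∈ univ.erase x, μ.real {y} = 1 - μ.real {x} := fun x => by
    rw [eq_sub_iff_add_eq, sum_erase_add _ _ (mem_univ x), sum_measureReal_singleton, coe_univ,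
      probReal_univ]
  rw [integral_pi_eq_sum_prod_measureReal]
  simp only [mul_sum, mul_ite, mul_zero]
  rw [sum_comm]
  refine sum_congr rfl fun x _ => ?_
  calc _ = μ.real {x} * ∑ ω : Fin n → α,
          if (∑ i, if ω i = x then 1 else 0 : ℕ) = k then ∏ i, μ.real {ω i} else 0 := by
        simp only [mul_comm (μ.real {x}), sum_mul, ite_mul, zero_mul]
    _ = _ := by rw [sum_prod_of_count_eq (fun y => μ.real {y}), hcompl]; ring

theorem expected_total_mass_alternating_general {X : Type*} [Fintype X] [DecidableEq X]
    [MeasurableSpace X] [MeasurableSingletonClass X]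
    (n k : ℕ)
    (μX : Measure X) [IsProbabilityMeasure μX]
    (p : X → ℝ) (hp : ∀ x, (μX {x}).toReal = p x) :
    (∫ ω, (∑ x, if (∑ i, if ω i = x then 1 else 0 : ℕ) = k then p x else 0)
        ∂(Measure.pi fun _ : Fin n => μX))
      = (n.choose k : ℝ) *
          (∑ i ∈ Finset.Icc 1 (n - k),
            (-1 : ℝ) ^ (i - 1) * ∑ x, p x ^ (k + i) * (1 - p x) ^ (n - (k + i)))
        + (n.choose k : ℝ) * (-1 : ℝ) ^ (n - k) * ∑ x, p x ^ (n + 1) := by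
  obtain rfl : p = fun x => μX.real {x} := funext fun x => (hp x).symm
  rw [integral_sum_ite_count_eq]
  rcases le_or_gt k n with hk | hk
  · simp only [mul_assoc, pow_succ_mul_one_sub_pow_eq_sum_Icc _ hk, mul_add, sum_add_distrib,
      mul_sum]
    rw [sum_comm]
  · simp [Nat.choose_eq_zero_of_lt hk]

/-- With `g k n = ∑ x, p x ^ k * (1 - p x) ^ (n - k)` and remainder
`R = C(n,k) * (-1)^(n-k) * ∑ x, p x ^ (n+1)`, the expected total mass satisfies
`E[M_k] = C(n,k) * ∑_{i=1}^{n-k} (-1)^(i-1) g (k+i) n + R`. -/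
theorem expected_total_mass_alternating {X : Type*} [Fintype X] [DecidableEq X]
    [MeasurableSpace X] [MeasurableSingletonClass X]
    (n k : ℕ) (hk : k ≤ n)
    (μX : Measure X) [IsProbabilityMeasure μX]
    (p : X → ℝ) (hp : ∀ x, (μX {x}).toReal = p x) :
    (∫ ω, (∑ x, if (∑ i, if ω i = x then 1 else 0 : ℕ) = k then p x else 0)
        ∂(Measure.pi fun _ : Fin n => μX))
      = (n.choose k : ℝ) *
          (∑ i ∈ Finset.Icc 1 (n - k),
            (-1 : ℝ) ^ (i - 1) * ∑ x, p x ^ (k + i) * (1 - p x) ^ (n - (k + i)))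
        + (n.choose k : ℝ) * (-1 : ℝ) ^ (n - k) * ∑ x, p x ^ (n + 1) :=
  expected_total_mass_alternating_general n k μX p hp
end

section
/- For the expected missing mass: E[M₀] = Σ_{k=1}^{n} (-1)^{k-1} g_k(n) + (-1)^n Σ_x p_x^{n+1}, where g_k(n) = Σ_x p_x^k (1-p_x)^{n-k}. -/
/-!
By linearity and independence of the sample, `E[M₀] = ∑ x, p x * (1 - p x) ^ n`. The formula
then follows termwise from `p (1 - p) ^ n = ∑_{k=1}^{n} (-1)^(k-1) p^k (1 - p)^(n-k) + (-1)^n p^(n+1)`,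
which comes from splitting off one factor `1 - p` at a time.
-/

open Finset MeasureTheory

theorem mul_one_sub_pow_eq_alternating_sum {R : Type*} [CommRing R] (p : R) (n : ℕ) :
    p * (1 - p) ^ n = (∑ k ∈ Icc 1 n, (-1) ^ (k - 1) * (p ^ k * (1 - p) ^ (n - k)))
      + (-1) ^ n * p ^ (n + 1) := by
  induction n with
  | zero => simp
  | succ n ih =>
    have hshift : ∀ k ∈ Icc 1 n, (-1) ^ (k - 1) * (p ^ k * (1 - p) ^ (n + 1 - k))
        = (1 - p) * ((-1) ^ (k - 1) * (p ^ k * (1 - p) ^ (n - k))) := by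
      intro k hk
      rw [Nat.sub_add_comm (mem_Icc.mp hk).2, pow_succ]
      ring
    rw [sum_Icc_succ_top (by omega), sum_congr rfl hshift, ← mul_sum,
      eq_sub_of_add_eq ih.symm, Nat.add_sub_cancel, Nat.sub_self]
    ring

theorem setOf_count_eq_zero_eq_pi {ι X : Type*} [Fintype ι] [DecidableEq X] (x : X) :
    {ω : ι → X | (∑ i, if ω i = x then 1 else 0 : ℕ) = 0} = Set.univ.pi fun _ => {x}ᶜ := by
  ext ω
  simp [Set.mem_pi]

theorem integral_pi_ite_count_eq_zero {ι X : Type*} [Fintype ι] [DecidableEq X]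
    [MeasurableSpace X] [MeasurableSingletonClass X] (μ : Measure X) [IsProbabilityMeasure μ]
    (x : X) (c : ℝ) :
    ∫ ω, (if (∑ i, if ω i = x then 1 else 0 : ℕ) = 0 then c else 0) ∂(Measure.pi fun _ : ι => μ)
      = c * (1 - μ.real {x}) ^ Fintype.card ι := by
  have hpi := setOf_count_eq_zero_eq_pi (ι := ι) x
  have hmeas : MeasurableSet (Set.univ.pi fun _ : ι => ({x}ᶜ : Set X)) :=
    .univ_pi fun _ => (measurableSet_singleton x).compl
  calc _ = ∫ ω, (Set.univ.pi fun _ : ι => ({x}ᶜ : Set X)).indicator (fun _ => c) ω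
          ∂(Measure.pi fun _ : ι => μ) := by
        congr 1 with ω
        simp only [← hpi, Set.indicator_apply, Set.mem_ofPred_eq]
    _ = c * (1 - μ.real {x}) ^ Fintype.card ι := by
        rw [integral_indicator_const _ hmeas, measureReal_def, Measure.pi_pi, prod_const,
          ENNReal.toReal_pow, ← measureReal_def, measureReal_compl (measurableSet_singleton x),
          probReal_univ, card_univ, smul_eq_mul, mul_comm]

/-- For the expected missing mass `M₀ = ∑ x, p x * 1[N x = 0]`:
`E[M₀] = ∑_{k=1}^{n} (-1)^(k-1) g k n + (-1)^n * ∑ x, p x ^ (n+1)`,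
where `g k n = ∑ x, p x ^ k * (1 - p x) ^ (n - k)`. -/
theorem expected_missing_mass {X : Type*} [Fintype X] [DecidableEq X]
    [MeasurableSpace X] [MeasurableSingletonClass X]
    (n : ℕ)
    (μX : Measure X) [IsProbabilityMeasure μX]
    (p : X → ℝ) (hp : ∀ x, (μX {x}).toReal = p x) :
    (∫ ω, (∑ x, if (∑ i, if ω i = x then 1 else 0 : ℕ) = 0 then p x else 0)
        ∂(Measure.pi fun _ : Fin n => μX))
      = (∑ k ∈ Finset.Icc 1 n,
          (-1 : ℝ) ^ (k - 1) * ∑ x, p x ^ k * (1 - p x) ^ (n - k))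
        + (-1 : ℝ) ^ n * ∑ x, p x ^ (n + 1) := by
  rw [integral_finsetSum _ fun x _ => Integrable.of_finite]
  simp only [integral_pi_ite_count_eq_zero, Fintype.card_fin, measureReal_def, hp,
    mul_one_sub_pow_eq_alternating_sum, sum_add_distrib, mul_sum]
  rw [sum_comm]
end

section
/- The Good–Turing identity: E[M_k] = ((k+1)/(n+1))·f_{k+1}(n+1), where f_{k+1}(n+1) = C(n+1,k+1)·Σ_x p_x^{k+1}(1-p_x)^{n-k}. -/
/-!
By linearity, `E[M_k] = ∑ x, p x * P(N_x = k)`, and `N_x` is binomial: the event `N_x = k` is the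
disjoint union, over the `k`-subsets `S` of sample positions, of the boxes on which the sample
equals `x` exactly at the positions in `S`, each of product measure `p x ^ k * (1 - p x) ^ (n - k)`.
The identity `(n + 1) * C(n, k) = (k + 1) * C(n + 1, k + 1)` then turns `C(n, k)` into the stated
factor.
-/

open Finset MeasureTheory

section SampleCount

variable {ι α : Type*} [Fintype ι] [DecidableEq ι] {A : Set α} [DecidablePred (· ∈ A)]

lemma preimage_filter_mem_singleton_eq_univ_pi (S : Finset ι) :
    (fun ω : ι → α ↦ ({i | ω i ∈ A} : Finset ι)) ⁻¹' {S} =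
      Set.univ.pi fun i ↦ if i ∈ S then A else Aᶜ := by
  ext ω
  simp only [Set.mem_preimage, Set.mem_singleton_iff, Set.mem_univ_pi, Finset.ext_iff,
    mem_filter_univ]
  refine forall_congr' fun i ↦ ?_
  split_ifs with hi <;> simp [hi]

variable [MeasurableSpace α] (μ : Measure α) [IsProbabilityMeasure μ]

lemma measureReal_pi_filter_mem_eq (hA : MeasurableSet A) (S : Finset ι) :
    (Measure.pi fun _ : ι ↦ μ).real ((fun ω : ι → α ↦ ({i | ω i ∈ A} : Finset ι)) ⁻¹' {S}) =
      μ.real A ^ #S * (1 - μ.real A) ^ (Fintype.card ι - #S) := by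
  rw [preimage_filter_mem_singleton_eq_univ_pi, measureReal_def, Measure.pi_pi,
    ENNReal.toReal_prod]
  simp_rw [apply_ite μ, apply_ite ENNReal.toReal, ← measureReal_def]
  rw [prod_ite, prod_const, prod_const, probReal_compl_eq_one_sub hA, filter_not,
    filter_mem_eq_of_subset (subset_univ S), card_univ_sdiff]

lemma measureReal_pi_card_filter_mem_eq (hA : MeasurableSet A) (k : ℕ) :
    (Measure.pi fun _ : ι ↦ μ).real {ω | #{i | ω i ∈ A} = k} =
      (Fintype.card ι).choose k * μ.real A ^ k * (1 - μ.real A) ^ (Fintype.card ι - k) := by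
  have hfibres : {ω : ι → α | #{i | ω i ∈ A} = k} =
      (fun ω : ι → α ↦ ({i | ω i ∈ A} : Finset ι)) ⁻¹' ↑(powersetCard k (univ : Finset ι)) := by
    ext ω; simp
  rw [hfibres, ← sum_measureReal_preimage_singleton _ fun _ _ ↦ ?_]
  · rw [sum_congr rfl fun S hS ↦ by
      rw [measureReal_pi_filter_mem_eq μ hA, mem_powersetCard_univ.1 hS], sum_const,
      card_powersetCard, card_univ, nsmul_eq_mul, mul_assoc]
  · rw [preimage_filter_mem_singleton_eq_univ_pi]
    exact .univ_pi fun i ↦ by split_ifs <;> [exact hA; exact hA.compl]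

end SampleCount

lemma Nat.cast_choose_eq_div_mul_choose_succ {K : Type*} [Field K] [CharZero K] (n k : ℕ) :
    (n.choose k : K) = (k + 1) / (n + 1) * (n + 1).choose (k + 1) := by
  rw [div_mul_eq_mul_div, eq_div_iff (Nat.cast_add_one_ne_zero n)]
  norm_cast
  rw [mul_comm, Nat.add_one_mul_choose_eq, mul_comm]

theorem good_turing_identity_general {X : Type*} [Fintype X] [DecidableEq X]
    [MeasurableSpace X] [MeasurableSingletonClass X]
    (n k : ℕ)
    (μX : Measure X) [IsProbabilityMeasure μX]
    (p : X → ℝ) (hp : ∀ x, (μX {x}).toReal = p x) :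
    (∫ ω, (∑ x, if (∑ i, if ω i = x then 1 else 0 : ℕ) = k then p x else 0)
        ∂(Measure.pi fun _ : Fin n => μX))
      = ((k + 1 : ℝ) / (n + 1)) *
          (((n + 1).choose (k + 1) : ℝ) *
            ∑ x, p x ^ (k + 1) * (1 - p x) ^ (n - k)) := by
  have hindicator (x : X) (ω : Fin n → X) :
      (if (∑ i, if ω i = x then 1 else 0 : ℕ) = k then p x else 0) =
        {ω : Fin n → X | #{i | ω i ∈ ({x} : Set X)} = k}.indicator (fun _ ↦ p x) ω := by
    simp [Set.indicator_apply, sum_boole]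
  have hlaw (x : X) :
      (Measure.pi fun _ : Fin n => μX).real {ω | #{i | ω i ∈ ({x} : Set X)} = k} =
        n.choose k * p x ^ k * (1 - p x) ^ (n - k) := by
    rw [measureReal_pi_card_filter_mem_eq μX (.singleton x), measureReal_def, hp,
      Fintype.card_fin]
  simp_rw [hindicator]
  rw [integral_finsetSum _ fun x _ ↦
    (integrable_const (p x)).indicator (Set.toFinite _).measurableSet]
  simp_rw [integral_indicator_const _ (Set.toFinite _).measurableSet, hlaw,
    Nat.cast_choose_eq_div_mul_choose_succ (K := ℝ) n k, mul_sum]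
  refine sum_congr rfl fun x _ ↦ ?_
  ring

/-- The Good–Turing identity: `E[M_k] = ((k+1)/(n+1)) * f (k+1) (n+1)`, where
`f (k+1) (n+1) = C(n+1, k+1) * ∑ x, p x ^ (k+1) * (1 - p x) ^ (n-k)`. -/
theorem good_turing_identity {X : Type*} [Fintype X] [DecidableEq X]
    [MeasurableSpace X] [MeasurableSingletonClass X]
    (n k : ℕ) (hk : k ≤ n)
    (μX : Measure X) [IsProbabilityMeasure μX]
    (p : X → ℝ) (hp : ∀ x, (μX {x}).toReal = p x) :
    (∫ ω, (∑ x, if (∑ i, if ω i = x then 1 else 0 : ℕ) = k then p x else 0)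
        ∂(Measure.pi fun _ : Fin n => μX))
      = ((k + 1 : ℝ) / (n + 1)) *
          (((n + 1).choose (k + 1) : ℝ) *
            ∑ x, p x ^ (k + 1) * (1 - p x) ^ (n - k)) :=
  good_turing_identity_general n k μX p hp
end

section
/- The bias of the modified Good–Turing estimator M̂_k^{G'} = ((k+1)/(n-k))·Φ_{k+1} equals Σ_x C(n,k)·p_x^{k+2}(1-p_x)^{n-k-1}, and hence is at least C(n,k)·p_min^{k+2}(1-p_min)^{n-k-1} where p_min = min_x p_x. -/
/-!
The number of occurrences `N_x` of a symbol `x` in an i.i.d. sample of size `n` is binomial with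
parameters `n` and `p_x`: the event `N_x = m` is the disjoint union, over the `m`-subsets `s` of
sample positions, of the cylinders `{ω | ω j = x ↔ j ∈ s}`. Hence
`E[1{N_x = k+1}] = C(n,k+1) p_x^(k+1) (1-p_x)^(n-k-1)` and
`E[p_x 1{N_x = k}] = C(n,k) p_x^(k+1) (1-p_x)^(n-k)`. Since `(k+1)/(n-k) · C(n,k+1) = C(n,k)`,
the contribution of `x` to the bias is `C(n,k) p_x^(k+1) (1-p_x)^(n-k-1) (1 - (1-p_x))`. All
contributions are nonnegative, so the sum dominates the one of a symbol of minimal probability.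
-/

open Finset MeasureTheory

section
variable {ι X : Type*} [Fintype ι]

lemma setOf_card_filter_mem_eq_biUnion (A : Set X) [DecidablePred (· ∈ A)] (m : ℕ) :
    {ω : ι → X | #{j | ω j ∈ A} = m}
      = ⋃ s ∈ powersetCard m univ, (fun ω ↦ ({j | ω j ∈ A} : Finset ι)) ⁻¹' {s} := by
  ext ω; simp

variable [DecidableEq ι]

lemma preimage_filter_mem_eq_pi (A : Set X) [DecidablePred (· ∈ A)] (s : Finset ι) :
    (fun ω : ι → X ↦ ({j | ω j ∈ A} : Finset ι)) ⁻¹' {s}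
      = Set.univ.pi fun j ↦ if j ∈ s then A else Aᶜ := by
  ext ω
  simp only [Set.mem_preimage, Set.mem_singleton_iff, Finset.ext_iff, mem_filter, mem_univ,
    true_and, Set.mem_univ_pi]
  refine forall_congr' fun j ↦ ?_
  by_cases hj : j ∈ s <;> simp [hj]

variable [MeasurableSpace X]

lemma measurableSet_preimage_filter_mem {A : Set X} (hA : MeasurableSet A)
    [DecidablePred (· ∈ A)] (s : Finset ι) :
    MeasurableSet ((fun ω : ι → X ↦ ({j | ω j ∈ A} : Finset ι)) ⁻¹' {s}) := by
  rw [preimage_filter_mem_eq_pi]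
  exact .univ_pi fun j ↦ by split_ifs; exacts [hA, hA.compl]

lemma measurableSet_setOf_card_filter_mem {A : Set X} (hA : MeasurableSet A)
    [DecidablePred (· ∈ A)] (m : ℕ) :
    MeasurableSet {ω : ι → X | #{j | ω j ∈ A} = m} := by
  rw [setOf_card_filter_mem_eq_biUnion]
  exact Finset.measurableSet_biUnion _ fun s _ ↦ measurableSet_preimage_filter_mem hA s

lemma measure_pi_univ_pi_ite_compl (μ : Measure X) [SigmaFinite μ] (A : Set X) (s : Finset ι) :
    Measure.pi (fun _ : ι ↦ μ) (Set.univ.pi fun j ↦ if j ∈ s then A else Aᶜ)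
      = μ A ^ #s * μ Aᶜ ^ (Fintype.card ι - #s) := by
  simp only [Measure.pi_pi, apply_ite μ, prod_ite, filter_mem_eq_of_subset (subset_univ s),
    filter_notMem_eq_sdiff, card_univ_sdiff, prod_const]

lemma measureReal_pi_card_filter_mem (μ : Measure X) [IsProbabilityMeasure μ] {A : Set X}
    (hA : MeasurableSet A) [DecidablePred (· ∈ A)] (m : ℕ) :
    (Measure.pi fun _ : ι ↦ μ).real {ω | #{j | ω j ∈ A} = m}
      = (Fintype.card ι).choose m * μ.real A ^ m * (1 - μ.real A) ^ (Fintype.card ι - m) := by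
  have hcylinder (s : Finset ι) (hs : s ∈ powersetCard m univ) :
      (Measure.pi fun _ : ι ↦ μ).real ((fun ω ↦ ({j | ω j ∈ A} : Finset ι)) ⁻¹' {s})
        = μ.real A ^ m * (1 - μ.real A) ^ (Fintype.card ι - m) := by
    rw [mem_powersetCard_univ] at hs
    rw [measureReal_def, preimage_filter_mem_eq_pi, measure_pi_univ_pi_ite_compl, hs,
      ENNReal.toReal_mul, ENNReal.toReal_pow, ENNReal.toReal_pow, ← measureReal_def,
      ← measureReal_def, probReal_compl_eq_one_sub hA]
  rw [setOf_card_filter_mem_eq_biUnion,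
    measureReal_biUnion_finset (Set.pairwiseDisjoint_fiber _ _)
      fun s _ ↦ measurableSet_preimage_filter_mem hA s,
    sum_congr rfl hcylinder, sum_const, card_powersetCard, card_univ, nsmul_eq_mul, mul_assoc]

lemma integral_ite_count_eq [DecidableEq X] [MeasurableSingletonClass X] (μ : Measure X)
    [IsProbabilityMeasure μ] (x : X) (m : ℕ) (c : ℝ) :
    ∫ ω, (if (∑ j, if ω j = x then 1 else 0 : ℕ) = m then c else 0) ∂(Measure.pi fun _ : ι ↦ μ)
      = (Fintype.card ι).choose m * μ.real {x} ^ m * (1 - μ.real {x}) ^ (Fintype.card ι - m)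
          * c := by
  have hind : (fun ω : ι → X ↦ if (∑ j, if ω j = x then 1 else 0 : ℕ) = m then c else 0)
      = {ω | #{j | ω j ∈ ({x} : Set X)} = m}.indicator fun _ ↦ c := by
    ext ω; simp [Set.indicator_apply]
  rw [hind, integral_indicator_const c (measurableSet_setOf_card_filter_mem (.singleton x) m),
    measureReal_pi_card_filter_mem μ (.singleton x), smul_eq_mul]
end

lemma add_one_div_sub_mul_choose_add_one {n k : ℕ} (hk : k < n) :
    ((k : ℝ) + 1) / ((n : ℝ) - k) * n.choose (k + 1) = n.choose k := by
  have hnk : (n : ℝ) - k ≠ 0 := sub_ne_zero.mpr (by exact_mod_cast hk.ne')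
  have hchoose : (n.choose (k + 1) : ℝ) * (k + 1) = n.choose k * ((n : ℝ) - k) := by
    have := congrArg (Nat.cast (R := ℝ)) (Nat.choose_succ_right_eq n k)
    push_cast [Nat.cast_sub hk.le] at this
    exact this
  rw [div_mul_eq_mul_div, div_eq_iff hnk]
  linarith

lemma modified_good_turing_bias_term {n k : ℕ} (hk : k < n) (q : ℝ) :
    ((k : ℝ) + 1) / ((n : ℝ) - k) * (n.choose (k + 1) * q ^ (k + 1) * (1 - q) ^ (n - (k + 1)))
        - n.choose k * q ^ k * (1 - q) ^ (n - k) * q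
      = n.choose k * q ^ (k + 2) * (1 - q) ^ (n - k - 1) := by
  obtain ⟨m, hm⟩ : ∃ m, n - k = m + 1 := ⟨n - k - 1, by omega⟩
  rw [show n - (k + 1) = m by omega, show n - k - 1 = m by omega, hm]
  linear_combination (q ^ (k + 1) * (1 - q) ^ m) * add_one_div_sub_mul_choose_add_one hk

theorem modified_good_turing_bias_general {X : Type*} [Fintype X] [DecidableEq X]
    [MeasurableSpace X] [MeasurableSingletonClass X]
    (n k : ℕ) (hk : k < n)
    (μX : Measure X) [IsProbabilityMeasure μX]
    (p : X → ℝ) (hp : ∀ x, (μX {x}).toReal = p x)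
    (pmin : ℝ) (hex : ∃ x, p x = pmin) :
    (∫ ω, (((k : ℝ) + 1) / ((n : ℝ) - k) *
          (∑ x, if (∑ j, if ω j = x then 1 else 0 : ℕ) = k + 1 then 1 else 0 : ℝ))
        ∂(Measure.pi fun _ : Fin n => μX))
      - (∫ ω, (∑ x, if (∑ j, if ω j = x then 1 else 0 : ℕ) = k then p x else 0)
          ∂(Measure.pi fun _ : Fin n => μX))
      = ∑ x, (n.choose k : ℝ) * p x ^ (k + 2) * (1 - p x) ^ (n - k - 1) ∧
    (n.choose k : ℝ) * pmin ^ (k + 2) * (1 - pmin) ^ (n - k - 1)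
      ≤ ∑ x, (n.choose k : ℝ) * p x ^ (k + 2) * (1 - p x) ^ (n - k - 1) := by
  have hpx (x : X) : μX.real {x} = p x := hp x
  constructor
  · rw [integral_const_mul, integral_finsetSum _ fun _ _ ↦ .of_finite,
      integral_finsetSum _ fun _ _ ↦ .of_finite, mul_sum, ← sum_sub_distrib]
    simp only [integral_ite_count_eq, Fintype.card_fin, hpx, mul_one]
    exact sum_congr rfl fun x _ ↦ modified_good_turing_bias_term hk (p x)
  · obtain ⟨x₀, rfl⟩ := hex
    have hterm_nonneg (x : X) :
        0 ≤ (n.choose k : ℝ) * p x ^ (k + 2) * (1 - p x) ^ (n - k - 1) := by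
      have hp₀ : 0 ≤ p x := by rw [← hpx x]; exact measureReal_nonneg
      have hp₁ : 0 ≤ 1 - p x := by rw [← hpx x, sub_nonneg]; exact measureReal_le_one
      positivity
    exact single_le_sum (fun x _ ↦ hterm_nonneg x) (mem_univ x₀)

/-- The bias of the modified Good–Turing estimator
`M̂_k^{G'} = ((k+1)/(n-k)) * Φ_(k+1)` equals
`∑ x, C(n,k) * p x ^ (k+2) * (1 - p x) ^ (n-k-1)`, and hence is at least
`C(n,k) * pmin^(k+2) * (1 - pmin)^(n-k-1)` where `pmin = min_x p x`. -/
theorem modified_good_turing_bias {X : Type*} [Fintype X] [DecidableEq X]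
    [MeasurableSpace X] [MeasurableSingletonClass X]
    (n k : ℕ) (hk : k < n)
    (μX : Measure X) [IsProbabilityMeasure μX]
    (p : X → ℝ) (hp : ∀ x, (μX {x}).toReal = p x)
    (hpos : ∀ x, 0 < p x)
    (pmin : ℝ) (hmin : ∀ x, pmin ≤ p x) (hex : ∃ x, p x = pmin) :
    (∫ ω, (((k : ℝ) + 1) / ((n : ℝ) - k) *
          (∑ x, if (∑ j, if ω j = x then 1 else 0 : ℕ) = k + 1 then 1 else 0 : ℝ))
        ∂(Measure.pi fun _ : Fin n => μX))
      - (∫ ω, (∑ x, if (∑ j, if ω j = x then 1 else 0 : ℕ) = k then p x else 0)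
          ∂(Measure.pi fun _ : Fin n => μX))
      = ∑ x, (n.choose k : ℝ) * p x ^ (k + 2) * (1 - p x) ^ (n - k - 1) ∧
    (n.choose k : ℝ) * pmin ^ (k + 2) * (1 - pmin) ^ (n - k - 1)
      ≤ ∑ x, (n.choose k : ℝ) * p x ^ (k + 2) * (1 - p x) ^ (n - k - 1) :=
  modified_good_turing_bias_general n k hk μX p hp pmin hex
end
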